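/- arXiv:2409.18069 — 5 statements merged into one kernel-verified Lean document; each statement's English description precedes it below -/
import Mathlib

section
/- For any line ℓ of the Fano plane, the set X_{ℓ^C} = { pairs {i,j} with {i,j} ∩ ℓ = ∅ } is a nice set. -/
/-- The third point on the Fano line through `i` and `j` (for ordered `i ≤ j`). -/
def fanoStar' : ℕ → ℕ → ℕ
  | 1, 2 => 5 | 1, 3 => 6 | 1, 4 => 7 | 1, 5 => 2 | 1, 6 => 3 | 1, 7 => 4
  | 2, 3 => 7 | 2, 4 => 6 | 2, 5 => 1 | 2, 6 => 4 | 2, 7 => 3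
  | 3, 4 => 5 | 3, 5 => 4 | 3, 6 => 1 | 3, 7 => 2
  | 4, 5 => 3 | 4, 6 => 2 | 4, 7 => 1
  | 5, 6 => 7 | 5, 7 => 6
  | 6, 7 => 5
  | _, _ => 0

/-- `fanoStar i j = i * j`, the third point of the Fano plane line through `i` and `j`,
for the Fano plane with lines {1,2,5},{5,6,7},{7,4,1},{1,3,6},{6,4,2},{2,7,3},{3,4,5}. -/
def fanoStar (i j : ℕ) : ℕ := if i ≤ j then fanoStar' i j else fanoStar' j i

/-- The point set of the Fano plane. -/
def fanoI : Finset ℕ := {1, 2, 3, 4, 5, 6, 7}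

/-- The line `ℓ_{ij} = {i, j, i*j}` through two distinct points. -/
def fanoLine (i j : ℕ) : Finset ℕ := {i, j, fanoStar i j}

/-- The set of six pairs `P_{{i,j,k}}`. -/
def Pset (i j k : ℕ) : Set (Finset ℕ) :=
  {{i, j}, {j, k}, {k, i}, {i, fanoStar j k}, {j, fanoStar k i}, {k, fanoStar i j}}

/-- A set `T` of pairs of Fano points is *nice* if whenever `{i,j} ∈ T` and `{i*j, k} ∈ T`
with `k` not on the line through `i` and `j`, the whole set `P_{{i,j,k}}` is contained in `T`. -/
def IsNice (T : Set (Finset ℕ)) : Prop :=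
  ∀ i j k : ℕ, i ∈ fanoI → j ∈ fanoI → k ∈ fanoI → i ≠ j → k ∉ fanoLine i j →
    ({i, j} : Finset ℕ) ∈ T → ({fanoStar i j, k} : Finset ℕ) ∈ T → Pset i j k ⊆ T

/-- The lines of the Fano plane. -/
def fanoLines : Finset (Finset ℕ) :=
  {{1, 2, 5}, {5, 6, 7}, {7, 4, 1}, {1, 3, 6}, {6, 4, 2}, {2, 7, 3}, {3, 4, 5}}

def fcond (ℓ s : Finset ℕ) : Prop := s.card = 2 ∧ s ⊆ fanoI ∧ Disjoint s ℓ

instance : DecidablePred (fcond ℓ) := fun s => by unfold fcond; infer_instance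

lemma key : ∀ ℓ ∈ fanoLines, ∀ i ∈ fanoI, ∀ j ∈ fanoI, ∀ k ∈ fanoI,
    i ≠ j → k ∉ fanoLine i j → fcond ℓ {i, j} → fcond ℓ {fanoStar i j, k} →
    fcond ℓ {i, j} ∧ fcond ℓ {j, k} ∧ fcond ℓ {k, i} ∧ fcond ℓ {i, fanoStar j k} ∧
      fcond ℓ {j, fanoStar k i} ∧ fcond ℓ {k, fanoStar i j} := by decide

/-- For any line `ℓ` of the Fano plane, `X_{ℓ^C}`, the set of pairs of Fano points
disjoint from `ℓ`, is a nice set. -/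
theorem isNice_X_lineComplement :
    ∀ ℓ ∈ fanoLines, IsNice {s : Finset ℕ | s.card = 2 ∧ s ⊆ fanoI ∧ Disjoint s ℓ} := by
  intro ℓ hℓ i j k hi hj hk hij hkl h1 h2
  have H := key ℓ hℓ i hi j hj k hk hij hkl h1 h2
  obtain ⟨a, b, c, d, e, f⟩ := H
  intro s hs
  rcases hs with rfl | rfl | rfl | rfl | rfl | rfl <;> assumption
end

section
/- For any point i of the Fano plane, the set X^{(i)} = { pairs {j,k} with j*k = i } is a nice set. -/
/-- Bounded-quantifier version of membership in `X^{(i)}`. -/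
def fanoQ (i : ℕ) (s : Finset ℕ) : Prop :=
  ∃ j ∈ fanoI, ∃ k ∈ fanoI, j ≠ k ∧ s = {j, k} ∧ fanoStar j k = i

instance (i s) : Decidable (fanoQ i s) := by unfold fanoQ; infer_instance

lemma fanoQ_iff (i : ℕ) (s : Finset ℕ) :
    fanoQ i s ↔ ∃ j k : ℕ, j ∈ fanoI ∧ k ∈ fanoI ∧ j ≠ k ∧ s = {j, k} ∧ fanoStar j k = i := by
  constructor
  · rintro ⟨j, hj, k, hk, h⟩; exact ⟨j, k, hj, hk, h⟩
  · rintro ⟨j, k, hj, hk, h⟩; exact ⟨j, hj, k, hk, h⟩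

set_option maxRecDepth 100000 in
set_option maxHeartbeats 4000000 in
lemma fano_key : ∀ i ∈ fanoI, ∀ a ∈ fanoI, ∀ b ∈ fanoI, ∀ c ∈ fanoI,
    a ≠ b → c ∉ fanoLine a b → fanoQ i {a, b} → fanoQ i {fanoStar a b, c} →
    fanoQ i {a, b} ∧ fanoQ i {b, c} ∧ fanoQ i {c, a} ∧ fanoQ i {a, fanoStar b c} ∧
      fanoQ i {b, fanoStar c a} ∧ fanoQ i {c, fanoStar a b} := by decide

/-- For any point `i` of the Fano plane, `X^{(i)}`, the set of pairs `{j,k}` with `j*k = i`,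
is a nice set. -/
theorem isNice_X_pointSup :
    ∀ i ∈ fanoI,
      IsNice {s : Finset ℕ |
        ∃ j k : ℕ, j ∈ fanoI ∧ k ∈ fanoI ∧ j ≠ k ∧ s = {j, k} ∧ fanoStar j k = i} := by
  intro i hi a b c ha hb hc hab hline h1 h2 s hs
  have h1' : fanoQ i {a, b} := (fanoQ_iff i _).mpr h1
  have h2' : fanoQ i {fanoStar a b, c} := (fanoQ_iff i _).mpr h2
  obtain ⟨q1, q2, q3, q4, q5, q6⟩ := fano_key i hi a ha b hb c hc hab hline h1' h2'
  simp only [Pset, Set.mem_insert_iff, Set.mem_singleton_iff] at hs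
  rcases hs with rfl | rfl | rfl | rfl | rfl | rfl
  · exact (fanoQ_iff i _).mp q1
  · exact (fanoQ_iff i _).mp q2
  · exact (fanoQ_iff i _).mp q3
  · exact (fanoQ_iff i _).mp q4
  · exact (fanoQ_iff i _).mp q5
  · exact (fanoQ_iff i _).mp q6
end

section
/- If ε : G × G → ℂ is a graded contraction of a G-grading Γ of a Lie algebra L with L_e = 0 (where e is the identity of G = (Z/2Z)^3), then the map ε' defined by ε'(g,h) = ε(g,h) if g, h, and g+h are all nonzero, and ε'(g,h) = 0 otherwise, is also a graded contraction of Γ, and the Lie algebras L^ε and L^{ε'} are equal (the brackets [·,·]^ε and [·,·]^{ε'} coincide). -/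
/-- The group `G = (ℤ/2)³`. -/
abbrev GZ : Type := ZMod 2 × ZMod 2 × ZMod 2

/-- A `G`-grading of a complex Lie algebra `L`: a family of submodules forming an internal
direct sum decomposition and compatible with the bracket. -/
structure LieGrading (G : Type) [AddCommGroup G] [DecidableEq G]
    (L : Type) [LieRing L] [LieAlgebra ℂ L] where
  comp : G → Submodule ℂ L
  internal : DirectSum.IsInternal comp
  bracket_mem : ∀ (g h : G) (x y : L), x ∈ comp g → y ∈ comp h → ⁅x, y⁆ ∈ comp (g + h)

/-- A graded contraction of a grading `Γ`: a map `ε : G × G → ℂ` together with the contracted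
product `[x,y]^ε = ε(g,h)[x,y]` (for `x ∈ L_g`, `y ∈ L_h`, extended bilinearly), which is
required to be a Lie bracket (alternating and satisfying the Jacobi identity). -/
structure GradedContraction {G : Type} [AddCommGroup G] [DecidableEq G]
    {L : Type} [LieRing L] [LieAlgebra ℂ L] (Γ : LieGrading G L) where
  eps : G → G → ℂ
  bracket : L →ₗ[ℂ] L →ₗ[ℂ] L
  bracket_apply : ∀ (g h : G) (x y : L),
    x ∈ Γ.comp g → y ∈ Γ.comp h → bracket x y = eps g h • ⁅x, y⁆
  bracket_self : ∀ x : L, bracket x x = 0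
  jacobi : ∀ x y z : L,
    bracket x (bracket y z) + bracket y (bracket z x) + bracket z (bracket x y) = 0

/-- If `ε` is a graded contraction of a `(ℤ/2)³`-grading `Γ` with `L_e = 0`, then the map `ε'`
given by `ε'(g,h) = ε(g,h)` when `g`, `h` and `g+h` are all nonzero and `ε'(g,h) = 0`
otherwise, is also a graded contraction of `Γ`, and the contracted brackets coincide. -/
theorem admissible_gradedContraction_of_gradedContraction
    {L : Type} [LieRing L] [LieAlgebra ℂ L] (Γ : LieGrading GZ L)
    (h0 : Γ.comp 0 = ⊥) (c : GradedContraction Γ) :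
    ∃ c' : GradedContraction Γ,
      (∀ g h : GZ, c'.eps g h =
        if g ≠ 0 ∧ h ≠ 0 ∧ g + h ≠ 0 then c.eps g h else 0) ∧
      c'.bracket = c.bracket := by
  refine ⟨⟨fun g h => if g ≠ 0 ∧ h ≠ 0 ∧ g + h ≠ 0 then c.eps g h else 0,
    c.bracket, ?_, c.bracket_self, c.jacobi⟩, fun g h => rfl, rfl⟩
  intro g h x y hx hy
  by_cases hcase : g ≠ 0 ∧ h ≠ 0 ∧ g + h ≠ 0
  · rw [if_pos hcase]; exact c.bracket_apply g h x y hx hy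
  · rw [if_neg hcase, zero_smul]
    push_neg at hcase
    by_cases hg : g = 0
    · have : x = 0 := by
        subst hg; simpa [h0] using hx
      simp [this]
    by_cases hh : h = 0
    · have : y = 0 := by
        subst hh; simpa [h0] using hy
      simp [this]
    · have hgh : g + h = 0 := hcase hg hh
      have : ⁅x, y⁆ = 0 := by
        have := Γ.bracket_mem g h x y hx hy
        rw [hgh, h0] at this; simpa using this
      rw [c.bracket_apply g h x y hx hy, this, smul_zero]
end

section
/- In the complex octonion algebra O with its standard Z_2^3-grading, the orthogonal Lie algebra so(O,n) (with respect to the norm form n) satisfies: its identity-component so(O,n)_e in the induced grading is zero, and each nonzero homogeneous component so(O,n)_g (g ≠ e) has dimension 4; in particular each homogeneous component is an abelian subalgebra. -/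
/-- The underlying space of the complex octonions: coordinates in the orthonormal basis
`e₀,…,e₇` of the norm form. -/
abbrev Oct : Type := Fin 8 → ℂ

/-- The basis vector `e_i` of the octonions. -/
def octE (i : Fin 8) : Oct := fun j => if j = i then 1 else 0

/-- The degree of `e_i` in the standard `(ℤ/2)³`-grading of the octonions
(the Cayley–Dickson grading, `e₀` of degree `0`). -/
def octDeg : Fin 8 → GZ
  | 1 => (1, 0, 0) | 2 => (0, 1, 0) | 3 => (0, 0, 1) | 4 => (1, 1, 1)
  | 5 => (1, 1, 0) | 6 => (1, 0, 1) | 7 => (0, 1, 1)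
  | _ => (0, 0, 0)

/-- The homogeneous component `O_g` of the standard `(ℤ/2)³`-grading of the octonions. -/
noncomputable def octComp (g : GZ) : Submodule ℂ Oct :=
  Submodule.span ℂ {v : Oct | ∃ i : Fin 8, octDeg i = g ∧ v = octE i}

/-- The polar form of the octonion norm (in the orthonormal basis `e₀,…,e₇`). -/
noncomputable def octB : Oct →ₗ[ℂ] Oct →ₗ[ℂ] ℂ :=
  LinearMap.mk₂ ℂ (fun x y => ∑ i : Fin 8, x i * y i)
    (by intro x x' y; simp [add_mul, Finset.sum_add_distrib])
    (by intro c x y; simp [Finset.mul_sum, mul_assoc])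
    (by intro x y y'; simp [mul_add, Finset.sum_add_distrib])
    (by
      intro c x y
      simp only [Pi.smul_apply, smul_eq_mul, Finset.mul_sum]
      exact Finset.sum_congr rfl (fun i _ => by ring))

/-- The orthogonal Lie algebra `so(V,B)` as a submodule of `End(V)`. -/
def soSub {k V : Type*} [Field k] [AddCommGroup V] [Module k V]
    (B : V →ₗ[k] V →ₗ[k] k) : Submodule k (Module.End k V) where
  carrier := {f | ∀ x y : V, B (f x) y + B x (f y) = 0}
  add_mem' := by
    intro f g hf hg x y
    have h1 := hf x y
    have h2 := hg x y
    simp only [LinearMap.add_apply, map_add] at *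
    linear_combination h1 + h2
  zero_mem' := by intro x y; simp
  smul_mem' := by
    intro c f hf x y
    have h := hf x y
    simp only [LinearMap.smul_apply, map_smul, smul_eq_mul] at *
    linear_combination c * h

/-- The `g`-component of the grading induced on `gl(V)` by a grading of `V`. -/
def glComp {k V G : Type*} [Field k] [AddCommGroup V] [Module k V] [AddCommGroup G]
    (comp : G → Submodule k V) (g : G) : Submodule k (Module.End k V) where
  carrier := {f | ∀ h : G, ∀ v ∈ comp h, f v ∈ comp (g + h)}
  add_mem' := by
    intro f f' hf hf' h v hv
    simp only [LinearMap.add_apply]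
    exact (comp (g + h)).add_mem (hf h v hv) (hf' h v hv)
  zero_mem' := by intro h v hv; simp only [LinearMap.zero_apply]; exact (comp (g + h)).zero_mem
  smul_mem' := by
    intro c f hf h v hv
    simp only [LinearMap.smul_apply]
    exact (comp (g + h)).smul_mem c (hf h v hv)


section Aux

/-- Inverse of `octDeg`. -/
def octDegInv (g : GZ) : Fin 8 :=
  if g = octDeg 1 then 1 else if g = octDeg 2 then 2 else if g = octDeg 3 then 3
  else if g = octDeg 4 then 4 else if g = octDeg 5 then 5 else if g = octDeg 6 then 6
  else if g = octDeg 7 then 7 else 0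

lemma octDeg_octDegInv : ∀ g : GZ, octDeg (octDegInv g) = g := by decide
lemma octDegInv_octDeg : ∀ i : Fin 8, octDegInv (octDeg i) = i := by decide

/-- The permutation of basis indices induced by multiplication into degree `g`. -/
def octSig (g : GZ) (i : Fin 8) : Fin 8 := octDegInv (g + octDeg i)

def octRepA : Fin 8 → Fin 4 → Fin 8 :=
  ![![0,1,2,3], ![0,2,3,4], ![0,1,3,4], ![0,1,2,4], ![0,1,2,3], ![0,1,3,6], ![0,1,2,5], ![0,1,2,5]]

/-- Representatives of the pairs `{i, σ_g i}`. -/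
def octRep (g : GZ) : Fin 4 → Fin 8 := octRepA (octDegInv g)

lemma sig_sig : ∀ (g : GZ) (i : Fin 8), octSig g (octSig g i) = i := by decide
lemma sig_zero : ∀ i : Fin 8, octSig 0 i = i := by decide
lemma rep_ne_sig : ∀ g : GZ, g ≠ 0 → ∀ k : Fin 4, octRep g k ≠ octSig g (octRep g k) := by decide
lemma rep_inj : ∀ g : GZ, g ≠ 0 → ∀ k l : Fin 4, octRep g k = octRep g l → k = l := by decide
lemma rep_cross : ∀ g : GZ, g ≠ 0 → ∀ k l : Fin 4, octRep g k ≠ octSig g (octRep g l) := by decide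
lemma rep_cover : ∀ g : GZ, g ≠ 0 → ∀ m : Fin 8,
    (∃ k, m = octRep g k) ∨ (∃ k, m = octSig g (octRep g k)) := by decide

end Aux

section Basic

lemma octE_apply (i j : Fin 8) : octE i j = if j = i then 1 else 0 := rfl

lemma octE_eq_single (i : Fin 8) : octE i = Pi.single i (1 : ℂ) := by
  funext j; simp [octE, Pi.single_apply]

lemma octB_apply (x y : Oct) : octB x y = ∑ i : Fin 8, x i * y i := rfl

lemma sum_repr (x : Oct) : x = ∑ i : Fin 8, x i • octE i := by
  funext j
  simp [octE, Finset.sum_apply, mul_ite]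

lemma end_ext {f₁ f₂ : Module.End ℂ Oct} (h : ∀ i, f₁ (octE i) = f₂ (octE i)) : f₁ = f₂ := by
  apply Module.Basis.ext (Pi.basisFun ℂ (Fin 8))
  intro i
  have : (Pi.basisFun ℂ (Fin 8)) i = octE i := by
    rw [octE_eq_single]; simp [Pi.basisFun_apply]
  rw [this]; exact h i

end Basic

section Mem

lemma octB_octE_right (x : Oct) (j : Fin 8) : octB x (octE j) = x j := by
  simp [octB_apply, octE, mul_ite]

lemma mem_soSub_iff {f : Module.End ℂ Oct} :
    f ∈ soSub octB ↔ ∀ i j : Fin 8, f (octE i) j + f (octE j) i = 0 := by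
  constructor
  · intro hf i j
    have := hf (octE i) (octE j)
    rw [octB_octE_right] at this
    have h2 : octB (octE i) (f (octE j)) = f (octE j) i := by
      simp [octB_apply, octE, ite_mul]
    rwa [h2] at this
  · intro h x y
    have hfx : f x = ∑ i : Fin 8, x i • f (octE i) := by
      conv_lhs => rw [sum_repr x]
      simp
    have hfy : f y = ∑ j : Fin 8, y j • f (octE j) := by
      conv_lhs => rw [sum_repr y]
      simp
    have h1 : octB (f x) y = ∑ i : Fin 8, ∑ j : Fin 8, x i * (y j * (f (octE i)) j) := by
      rw [hfx, map_sum]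
      rw [LinearMap.sum_apply]
      refine Finset.sum_congr rfl fun i _ => ?_
      rw [map_smul, LinearMap.smul_apply, smul_eq_mul]
      rw [octB_apply, Finset.mul_sum]
      exact Finset.sum_congr rfl fun j _ => by ring
    have h2 : octB x (f y) = ∑ i : Fin 8, ∑ j : Fin 8, x i * (y j * (f (octE j)) i) := by
      rw [octB_apply]
      refine Finset.sum_congr rfl fun i _ => ?_
      rw [hfy]
      simp only [Finset.sum_apply, Pi.smul_apply, smul_eq_mul, Finset.mul_sum]
    rw [h1, h2, ← Finset.sum_add_distrib]
    refine Finset.sum_eq_zero fun i _ => ?_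
    rw [← Finset.sum_add_distrib]
    refine Finset.sum_eq_zero fun j _ => ?_
    linear_combination (x i * y j) * h i j

lemma octComp_eq (h : GZ) : octComp h = Submodule.span ℂ {octE (octDegInv h)} := by
  unfold octComp
  congr 1
  ext v
  constructor
  · rintro ⟨i, hi, rfl⟩
    have : i = octDegInv h := by rw [← hi, octDegInv_octDeg]
    subst this; rfl
  · rintro rfl
    exact ⟨octDegInv h, octDeg_octDegInv h, rfl⟩

lemma mem_octComp_iff {v : Oct} {h : GZ} :
    v ∈ octComp h ↔ ∀ j, j ≠ octDegInv h → v j = 0 := by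
  rw [octComp_eq, Submodule.mem_span_singleton]
  constructor
  · rintro ⟨c, rfl⟩ j hj
    simp [octE, hj]
  · intro hv
    refine ⟨v (octDegInv h), ?_⟩
    funext j
    by_cases hj : j = octDegInv h
    · subst hj; simp [octE]
    · simp [octE, hj, hv j hj]

lemma octE_mem_octComp (i : Fin 8) : octE i ∈ octComp (octDeg i) :=
  Submodule.subset_span ⟨i, rfl, rfl⟩

lemma mem_glComp_iff {f : Module.End ℂ Oct} {g : GZ} :
    f ∈ glComp octComp g ↔ ∀ i j : Fin 8, j ≠ octSig g i → f (octE i) j = 0 := by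
  constructor
  · intro hf i j hj
    have := hf (octDeg i) (octE i) (octE_mem_octComp i)
    rw [mem_octComp_iff] at this
    exact this j hj
  · intro hf h v hv
    rw [mem_octComp_iff] at hv
    have hv' : v = v (octDegInv h) • octE (octDegInv h) := by
      funext j
      by_cases hj : j = octDegInv h
      · subst hj; simp [octE]
      · simp [octE, hj, hv j hj]
    rw [hv', map_smul]
    refine Submodule.smul_mem _ _ ?_
    rw [mem_octComp_iff]
    intro j hj
    apply hf (octDegInv h) j
    unfold octSig
    rwa [octDeg_octDegInv]

lemma mem_S_iff {f : Module.End ℂ Oct} {g : GZ} :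
    f ∈ soSub octB ⊓ glComp octComp g ↔
      (∀ i j : Fin 8, f (octE i) j + f (octE j) i = 0) ∧
      (∀ i j : Fin 8, j ≠ octSig g i → f (octE i) j = 0) := by
  rw [Submodule.mem_inf, mem_soSub_iff, mem_glComp_iff]

lemma apply_octE_eq {f : Module.End ℂ Oct} {g : GZ}
    (hf : ∀ i j : Fin 8, j ≠ octSig g i → f (octE i) j = 0) (i : Fin 8) :
    f (octE i) = f (octE i) (octSig g i) • octE (octSig g i) := by
  funext j
  by_cases hj : j = octSig g i
  · subst hj; simp [octE]
  · simp [octE, hj, hf i j hj]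

end Mem

section Fm

/-- The elementary skew endomorphism `x ↦ x i • e_j - x j • e_i`. -/
def Fm (i j : Fin 8) : Module.End ℂ Oct where
  toFun x := x i • octE j - x j • octE i
  map_add' x y := by
    simp only [Pi.add_apply, add_smul]
    abel
  map_smul' c x := by
    simp only [Pi.smul_apply, smul_eq_mul, RingHom.id_apply, smul_sub, smul_smul]

lemma Fm_apply (i j : Fin 8) (x : Oct) : Fm i j x = x i • octE j - x j • octE i := rfl

end Fm

section Parts

lemma part1 : soSub octB ⊓ glComp octComp (0 : GZ) = ⊥ := by
  rw [eq_bot_iff]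
  intro f hf
  obtain ⟨sk, sp⟩ := mem_S_iff.mp hf
  rw [Submodule.mem_bot]
  apply end_ext
  intro i
  rw [LinearMap.zero_apply]
  funext j
  by_cases hj : j = i
  · subst hj
    have h := sk j j
    show f (octE j) j = 0
    linear_combination h / 2
  · exact sp i j (by rw [sig_zero]; exact hj)

lemma part3 (g : GZ) (f₁ f₂ : Module.End ℂ Oct)
    (h1 : f₁ ∈ soSub octB ⊓ glComp octComp g) (h2 : f₂ ∈ soSub octB ⊓ glComp octComp g) :
    ⁅f₁, f₂⁆ = 0 := by
  obtain ⟨sk1, sp1⟩ := mem_S_iff.mp h1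
  obtain ⟨sk2, sp2⟩ := mem_S_iff.mp h2
  rw [Ring.lie_def, sub_eq_zero]
  apply end_ext
  intro i
  rw [Module.End.mul_apply, Module.End.mul_apply]
  rw [apply_octE_eq sp2 i, map_smul, apply_octE_eq sp1 (octSig g i),
    apply_octE_eq sp1 i, map_smul, apply_octE_eq sp2 (octSig g i), sig_sig,
    smul_smul, smul_smul]
  congr 1
  linear_combination f₂ (octE i) (octSig g i) * sk1 i (octSig g i) -
    f₁ (octE i) (octSig g i) * sk2 i (octSig g i)

end Parts

section Dim

lemma Fm_skew (r s i j : Fin 8) : Fm r s (octE i) j + Fm r s (octE j) i = 0 := by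
  have e : ∀ a b : Fin 8, (if a = b then (1 : ℂ) else 0) = if b = a then 1 else 0 := by
    intro a b; simp [eq_comm]
  simp only [Fm_apply, Pi.sub_apply, Pi.smul_apply, smul_eq_mul, octE_apply]
  rw [e j s, e j r, e i s, e i r]
  ring

lemma v_supp {g : GZ} (hg : g ≠ 0) (k : Fin 4) (i j : Fin 8) (hj : j ≠ octSig g i) :
    Fm (octRep g k) (octSig g (octRep g k)) (octE i) j = 0 := by
  set r := octRep g k with hr
  simp only [Fm_apply, Pi.sub_apply, Pi.smul_apply, smul_eq_mul, octE_apply]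
  rcases eq_or_ne r i with h1 | h1
  · have h2 : octSig g r ≠ r := Ne.symm (rep_ne_sig g hg k)
    have h3 : j ≠ octSig g r := by rw [h1]; exact hj
    rw [if_neg h3, if_neg (fun h : octSig g r = i => h2 (by rw [h, ← h1])), mul_zero, zero_mul,
      sub_zero]
  · rcases eq_or_ne (octSig g r) i with h2 | h2
    · have h4 : j ≠ r := by
        intro h
        apply hj
        rw [h, ← h2, sig_sig]
      rw [if_neg h1, if_neg h4, zero_mul, mul_zero, sub_zero]
    · rw [if_neg h1, if_neg h2, zero_mul, zero_mul, sub_zero]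

lemma v_val1 {g : GZ} (hg : g ≠ 0) (k l : Fin 4) :
    Fm (octRep g k) (octSig g (octRep g k)) (octE (octRep g l)) =
      if k = l then octE (octSig g (octRep g l)) else 0 := by
  rw [Fm_apply]
  rw [show octE (octRep g l) (octSig g (octRep g k)) = 0 from
    if_neg (fun h => rep_cross g hg l k h.symm)]
  rw [zero_smul, sub_zero, octE_apply]
  rcases eq_or_ne k l with h | h
  · subst h; simp
  · rw [if_neg (fun h' : octRep g k = octRep g l => h (rep_inj g hg k l h')), if_neg h, zero_smul]

lemma v_val2 {g : GZ} (hg : g ≠ 0) (k l : Fin 4) :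
    Fm (octRep g k) (octSig g (octRep g k)) (octE (octSig g (octRep g l))) =
      if k = l then -octE (octRep g l) else 0 := by
  rw [Fm_apply]
  rw [show octE (octSig g (octRep g l)) (octRep g k) = 0 from
    if_neg (fun h => rep_cross g hg k l h)]
  rw [zero_smul, octE_apply]
  rcases eq_or_ne k l with h | h
  · subst h; simp
  · have h' : octSig g (octRep g k) ≠ octSig g (octRep g l) := by
      intro h''
      exact h (rep_inj g hg k l (by rw [← sig_sig g (octRep g k), h'', sig_sig]))
    rw [if_neg h', if_neg h, zero_smul, zero_sub, neg_zero]

lemma v_li {g : GZ} (hg : g ≠ 0) :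
    LinearIndependent ℂ (fun k : Fin 4 => Fm (octRep g k) (octSig g (octRep g k))) := by
  rw [Fintype.linearIndependent_iff]
  intro c hc l
  have h := congrArg
    (fun f : Module.End ℂ Oct => f (octE (octRep g l)) (octSig g (octRep g l))) hc
  simp only [LinearMap.sum_apply, LinearMap.smul_apply, v_val1 hg, LinearMap.zero_apply,
    Finset.sum_apply, Pi.smul_apply, smul_eq_mul, Pi.zero_apply] at h
  rw [Finset.sum_eq_single l] at h
  · simpa [octE] using h
  · intro k _ hk
    simp [hk, octE]
  · intro h'; exact absurd (Finset.mem_univ l) h'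

lemma span_S {g : GZ} (hg : g ≠ 0) :
    soSub octB ⊓ glComp octComp g =
      Submodule.span ℂ (Set.range (fun k : Fin 4 => Fm (octRep g k) (octSig g (octRep g k)))) := by
  apply le_antisymm
  · intro f hf
    obtain ⟨sk, sp⟩ := mem_S_iff.mp hf
    have hf_eq : f = ∑ k : Fin 4, f (octE (octRep g k)) (octSig g (octRep g k)) •
        Fm (octRep g k) (octSig g (octRep g k)) := by
      apply end_ext
      intro m
      rw [LinearMap.sum_apply]
      rcases rep_cover g hg m with ⟨l, rfl⟩ | ⟨l, rfl⟩
      · rw [apply_octE_eq sp]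
        rw [Finset.sum_eq_single l]
        · rw [LinearMap.smul_apply, v_val1 hg, if_pos rfl]
        · intro k _ hk
          rw [LinearMap.smul_apply, v_val1 hg, if_neg hk, smul_zero]
        · intro h'; exact absurd (Finset.mem_univ l) h'
      · rw [apply_octE_eq sp, sig_sig]
        rw [Finset.sum_eq_single l]
        · rw [LinearMap.smul_apply, v_val2 hg, if_pos rfl]
          have hs := sk (octSig g (octRep g l)) (octRep g l)
          rw [smul_neg, ← neg_smul]
          congr 1
          linear_combination hs
        · intro k _ hk
          rw [LinearMap.smul_apply, v_val2 hg, if_neg hk, smul_zero]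
        · intro h'; exact absurd (Finset.mem_univ l) h'
    rw [hf_eq]
    exact Submodule.sum_mem _ fun k _ =>
      Submodule.smul_mem _ _ (Submodule.subset_span ⟨k, rfl⟩)
  · rw [Submodule.span_le]
    rintro _ ⟨k, rfl⟩
    rw [SetLike.mem_coe, mem_S_iff]
    exact ⟨fun i j => Fm_skew _ _ i j, fun i j hj => v_supp hg k i j hj⟩

lemma part2 (g : GZ) (hg : g ≠ 0) :
    Module.finrank ℂ ↥(soSub octB ⊓ glComp octComp g) = 4 := by
  rw [span_S hg, finrank_span_eq_card (v_li hg)]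
  simp

end Dim

/-- In the complex octonion algebra with its standard `(ℤ/2)³`-grading, the induced grading
on the orthogonal Lie algebra `so(O,n)` has zero identity component, every other homogeneous
component has dimension 4, and every homogeneous component is an abelian subalgebra. -/
theorem soOct_components :
    (soSub octB ⊓ glComp octComp (0 : GZ) = ⊥) ∧
    (∀ g : GZ, g ≠ 0 → Module.finrank ℂ ↥(soSub octB ⊓ glComp octComp g) = 4) ∧
    (∀ (g : GZ) (f₁ f₂ : Module.End ℂ Oct),
      f₁ ∈ soSub octB ⊓ glComp octComp g → f₂ ∈ soSub octB ⊓ glComp octComp g →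
      ⁅f₁, f₂⁆ = 0) := by
  exact ⟨part1, part2, part3⟩
end

section
/- Let G = Z_2^3 and let Γ be a G-grading of a Lie algebra L with L_e = 0 and satisfying [L_g,L_h] = L_{g+h} for distinct nonzero g,h, and such that whenever g,h,k generate G there exist x ∈ L_g, y ∈ L_h, z ∈ L_k with [x,[y,z]] and [y,[z,x]] linearly independent. Then an admissible map ε : G×G → ℂ is a graded contraction of Γ if and only if (b1) ε(g,h) = ε(h,g) for all g,h, and (b2) ε(g,h+k)ε(h,k) = ε(k,g+h)ε(g,h) whenever ⟨g,h,k⟩ = G. -/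
/-!
For homogeneous `x ∈ L_g`, `y ∈ L_h`, `z ∈ L_k` the Jacobiator of the contracted bracket is
`ε(g,h,k) [x,[y,z]] + ε(h,k,g) [y,[z,x]] + ε(k,g,h) [z,[x,y]]`. Eliminating `[z,[x,y]]` by the
Jacobi identity of `L` and using the independence of the two remaining brackets gives (b2);
(b1) follows by comparing `[y,x]^ε` with `-[x,y]^ε` on a nonzero bracket, which exists since
`[L_g, L_h] = L_{g+h} ≠ 0`.

Conversely, (b1) makes the contracted bracket alternating, and when `g, h, k` generate `G`,
(b2) for `(g,h,k)` and `(h,k,g)` makes the three ternary coefficients equal, so the Jacobiator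
is a multiple of that of `L`. The other triples are degenerate in `ℤ₂³`: a zero degree (then an
argument lies in `L_0 = 0`), two equal degrees (then `[x,y] ∈ L_0 = 0` and the two surviving
coefficients agree by symmetry), or `g + h + k = 0` (then every coefficient contains a diagonal
value `ε(a,a) = 0`). Trilinearity extends the Jacobi identity from homogeneous elements to `L`.
-/

section Jacobiator

variable {R M : Type*} [CommSemiring R] [AddCommMonoid M] [Module R M]

def jacobiator (B : M →ₗ[R] M →ₗ[R] M) (x y z : M) : M :=
  B x (B y z) + B y (B z x) + B z (B x y)

variable (B : M →ₗ[R] M →ₗ[R] M) (x y z : M)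

theorem jacobiator_cycle : jacobiator B x y z = jacobiator B y z x := by
  unfold jacobiator; abel

@[simp]
theorem jacobiator_zero_right : jacobiator B x y 0 = 0 := by
  simp [jacobiator]

theorem jacobiator_add_right (z' : M) :
    jacobiator B x y (z + z') = jacobiator B x y z + jacobiator B x y z' := by
  simp only [jacobiator, map_add, LinearMap.add_apply]; abel

end Jacobiator

def ternary {G R : Type*} [Add G] [Mul R] (ε : G → G → R) (g h k : G) : R :=
  ε g (h + k) * ε h k

theorem ternary_eq_zero_of_add_eq {G R : Type*} [Add G] [MulZeroClass R] {ε : G → G → R}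
    (hdiag : ∀ g, ε g g = 0) {g h k : G} (hg : h + k = g) : ternary ε g h k = 0 := by
  rw [ternary, hg, hdiag, zero_mul]

def Admissible {G R : Type*} [Zero G] [Zero R] (ε : G → G → R) : Prop :=
  ∀ g, ε g g = 0 ∧ ε 0 g = 0 ∧ ε g 0 = 0

namespace LieGrading

variable {G : Type} [AddCommGroup G] [DecidableEq G] {L : Type} [LieRing L] [LieAlgebra ℂ L]
  (Γ : LieGrading G L)

@[elab_as_elim]
theorem induction_on {motive : L → Prop} (x : L) (mem : ∀ g, ∀ x ∈ Γ.comp g, motive x)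
    (zero : motive 0) (add : ∀ x y, motive x → motive y → motive (x + y)) : motive x :=
  Submodule.iSup_induction Γ.comp (motive := motive)
    (Γ.internal.submodule_iSup_eq_top ▸ Submodule.mem_top) mem zero add

theorem linearMap_ext {N : Type} [AddCommGroup N] [Module ℂ N] {f f' : L →ₗ[ℂ] N}
    (h : ∀ g, ∀ x ∈ Γ.comp g, f x = f' x) : f = f' :=
  LinearMap.ext fun x => Γ.induction_on x h (by simp) fun x y hx hy => by simp [hx, hy]

theorem jacobiator_eq_zero_of_homogeneous (B : L →ₗ[ℂ] L →ₗ[ℂ] L)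
    (hhom : ∀ g h k x y z, x ∈ Γ.comp g → y ∈ Γ.comp h → z ∈ Γ.comp k →
      jacobiator B x y z = 0)
    (x y z : L) : jacobiator B x y z = 0 := by
  have add {x y : L} (z z' : L) (h : jacobiator B x y z = 0) (h' : jacobiator B x y z' = 0) :
      jacobiator B x y (z + z') = 0 := by
    rw [jacobiator_add_right, h, h', add_zero]
  have h₁ : ∀ g h x y, x ∈ Γ.comp g → y ∈ Γ.comp h → ∀ z, jacobiator B x y z = 0 :=
    fun g h x y hx hy z =>
      Γ.induction_on z (fun k z hz => hhom g h k x y z hx hy hz) (by simp) add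
  have h₂ : ∀ g x, x ∈ Γ.comp g → ∀ y z, jacobiator B x y z = 0 := by
    intro g x hx y z
    rw [← jacobiator_cycle]
    refine Γ.induction_on y (fun h y hy => ?_) (by simp) add
    rw [jacobiator_cycle]
    exact h₁ g h x y hx hy z
  rw [jacobiator_cycle]
  refine Γ.induction_on x (fun g x hx => ?_) (by simp) add
  rw [← jacobiator_cycle]
  exact h₂ g x hx y z

theorem exists_lie_ne_zero {g h : G}
    (hspan : Submodule.span ℂ {z : L | ∃ x ∈ Γ.comp g, ∃ y ∈ Γ.comp h, z = ⁅x, y⁆} =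
      Γ.comp (g + h))
    (hne : Γ.comp (g + h) ≠ ⊥) : ∃ x ∈ Γ.comp g, ∃ y ∈ Γ.comp h, ⁅x, y⁆ ≠ 0 := by
  by_contra! hzero
  refine hne (hspan ▸ Submodule.span_eq_bot.2 ?_)
  rintro _ ⟨x, hx, y, hy, rfl⟩
  exact hzero x hx y hy

def IsContractedBracket (ε : G → G → ℂ) (B : L →ₗ[ℂ] L →ₗ[ℂ] L) : Prop :=
  ∀ g h x y, x ∈ Γ.comp g → y ∈ Γ.comp h → B x y = ε g h • ⁅x, y⁆

namespace IsContractedBracket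

variable {Γ} {ε : G → G → ℂ} {B : L →ₗ[ℂ] L →ₗ[ℂ] L} (hB : Γ.IsContractedBracket ε B)
  {g h k : G} {x y z : L}
include hB

theorem apply_mem (hx : x ∈ Γ.comp g) (hy : y ∈ Γ.comp h) : B x y ∈ Γ.comp (g + h) := by
  rw [hB g h x y hx hy]
  exact Submodule.smul_mem _ _ (Γ.bracket_mem g h x y hx hy)

theorem apply_apply (hx : x ∈ Γ.comp g) (hy : y ∈ Γ.comp h) (hz : z ∈ Γ.comp k) :
    B x (B y z) = ternary ε g h k • ⁅x, ⁅y, z⁆⁆ := by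
  rw [hB g (h + k) x _ hx (hB.apply_mem hy hz), hB h k y z hy hz, lie_smul, smul_smul,
    ternary]

theorem jacobiator_eq (hx : x ∈ Γ.comp g) (hy : y ∈ Γ.comp h) (hz : z ∈ Γ.comp k) :
    jacobiator B x y z = ternary ε g h k • ⁅x, ⁅y, z⁆⁆ + ternary ε h k g • ⁅y, ⁅z, x⁆⁆
      + ternary ε k g h • ⁅z, ⁅x, y⁆⁆ := by
  rw [jacobiator, hB.apply_apply hx hy hz, hB.apply_apply hy hz hx, hB.apply_apply hz hx hy]

theorem eps_comm_of_lie_ne_zero (halt : B.IsAlt) (hx : x ∈ Γ.comp g) (hy : y ∈ Γ.comp h)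
    (hxy : ⁅x, y⁆ ≠ 0) : ε g h = ε h g := by
  have hskew := halt.neg x y
  rw [hB g h x y hx hy, hB h g y x hy hx, ← lie_skew y x, smul_neg] at hskew
  exact smul_left_injective ℂ hxy (neg_injective hskew)

theorem ternary_eq_of_linearIndependent (hx : x ∈ Γ.comp g) (hy : y ∈ Γ.comp h)
    (hz : z ∈ Γ.comp k) (hjac : jacobiator B x y z = 0)
    (hli : LinearIndependent ℂ ![⁅x, ⁅y, z⁆⁆, ⁅y, ⁅z, x⁆⁆]) :
    ternary ε g h k = ternary ε k g h := by
  have hz' : ⁅z, ⁅x, y⁆⁆ = -⁅x, ⁅y, z⁆⁆ - ⁅y, ⁅z, x⁆⁆ := by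
    linear_combination (norm := module) lie_jacobi x y z
  rw [hB.jacobiator_eq hx hy hz, hz'] at hjac
  have := LinearIndependent.pair_iff.mp hli (ternary ε g h k - ternary ε k g h)
    (ternary ε h k g - ternary ε k g h) (by rw [← hjac]; module)
  exact sub_eq_zero.mp this.1

theorem isAlt_of_symm (hsymm : ∀ g h, ε g h = ε h g) : B.IsAlt := by
  have hflip : B.flip = -B :=
    Γ.linearMap_ext fun g x hx => Γ.linearMap_ext fun h y hy => by
      rw [LinearMap.flip_apply, LinearMap.neg_apply, LinearMap.neg_apply, hB h g y x hy hx,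
        hB g h x y hx hy, hsymm, ← lie_skew, smul_neg]
  intro x
  have hx := LinearMap.congr_fun₂ hflip x x
  rw [LinearMap.flip_apply, LinearMap.neg_apply, LinearMap.neg_apply, eq_neg_iff_add_eq_zero,
    ← two_smul ℂ, smul_eq_zero] at hx
  exact hx.resolve_left two_ne_zero

theorem jacobiator_eq_zero_of_ternary_eq (hx : x ∈ Γ.comp g) (hy : y ∈ Γ.comp h)
    (hz : z ∈ Γ.comp k) (h₁ : ternary ε g h k = ternary ε k g h)
    (h₂ : ternary ε h k g = ternary ε k g h) : jacobiator B x y z = 0 := by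
  rw [hB.jacobiator_eq hx hy hz, h₁, h₂, ← smul_add, ← smul_add, lie_jacobi, smul_zero]

theorem jacobiator_eq_zero_of_mem_same (hsymm : ∀ g h, ε g h = ε h g) (hx : x ∈ Γ.comp g)
    (hy : y ∈ Γ.comp g) (hz : z ∈ Γ.comp k) (hxy : ⁅x, y⁆ = 0) : jacobiator B x y z = 0 := by
  have hjac := lie_jacobi x y z
  rw [hxy, lie_zero, add_zero] at hjac
  have hT : ternary ε g k g = ternary ε g g k := by
    rw [ternary, ternary, add_comm k g, hsymm k g]
  rw [hB.jacobiator_eq hx hy hz, hxy, lie_zero, smul_zero, add_zero, hT, ← smul_add, hjac,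
    smul_zero]

theorem eps_comm (hadm : Admissible ε) (halt : B.IsAlt)
    (hne : ∀ g h, g ≠ 0 → h ≠ 0 → g ≠ h → ∃ x ∈ Γ.comp g, ∃ y ∈ Γ.comp h, ⁅x, y⁆ ≠ 0)
    (g h : G) : ε g h = ε h g := by
  obtain rfl | hg := eq_or_ne g 0
  · rw [(hadm h).2.1, (hadm h).2.2]
  obtain rfl | hh := eq_or_ne h 0
  · rw [(hadm g).2.1, (hadm g).2.2]
  obtain rfl | hgh := eq_or_ne g h
  · rfl
  obtain ⟨x, hx, y, hy, hxy⟩ := hne g h hg hh hgh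
  exact hB.eps_comm_of_lie_ne_zero halt hx hy hxy

end IsContractedBracket

noncomputable def proj (g : G) : L →ₗ[ℂ] L :=
  letI := Γ.internal.chooseDecomposition
  (Γ.comp g).subtype ∘ₗ DirectSum.component ℂ G (fun i => Γ.comp i) g ∘ₗ
    (DirectSum.decomposeLinearEquiv Γ.comp).toLinearMap

theorem proj_of_mem {g : G} {x : L} (hx : x ∈ Γ.comp g) : Γ.proj g x = x :=
  let := Γ.internal.chooseDecomposition
  DirectSum.decompose_of_mem_same Γ.comp hx

theorem proj_of_mem_of_ne {g g' : G} {x : L} (hx : x ∈ Γ.comp g) (h : g ≠ g') :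
    Γ.proj g' x = 0 :=
  let := Γ.internal.chooseDecomposition
  DirectSum.decompose_of_mem_ne Γ.comp hx h

noncomputable def contractedBracket [Fintype G] (ε : G → G → ℂ) : L →ₗ[ℂ] L →ₗ[ℂ] L :=
  ∑ g, ∑ h,
    ε g h • (LieModule.toEnd ℂ L L : L →ₗ[ℂ] L →ₗ[ℂ] L).compl₁₂ (Γ.proj g) (Γ.proj h)

theorem isContractedBracket_contractedBracket [Fintype G] (ε : G → G → ℂ) :
    Γ.IsContractedBracket ε (Γ.contractedBracket ε) := by
  intro g h x y hx hy
  simp only [contractedBracket, LinearMap.coe_sum, LinearMap.coe_smul, Finset.sum_apply,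
    Pi.smul_apply, LinearMap.compl₁₂_apply, LieHom.coe_toLinearMap, LieModule.toEnd_apply_apply]
  rw [Fintype.sum_eq_single g fun g' hg' => by simp [Γ.proj_of_mem_of_ne hx (Ne.symm hg')],
    Fintype.sum_eq_single h fun h' hh' => by simp [Γ.proj_of_mem_of_ne hy (Ne.symm hh')],
    Γ.proj_of_mem hx, Γ.proj_of_mem hy]

end LieGrading

namespace GZ

theorem closure_eq_top_of_forall {g h k : GZ}
    (hspan : ∀ x : GZ, x = 0 ∨ x = g ∨ x = h ∨ x = k ∨ x = g + h ∨ x = g + k ∨ x = h + k ∨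
      x = g + h + k) :
    AddSubgroup.closure ({g, h, k} : Set GZ) = ⊤ := by
  refine eq_top_iff.2 fun x _ => ?_
  have hg : g ∈ AddSubgroup.closure ({g, h, k} : Set GZ) :=
    AddSubgroup.subset_closure (by simp)
  have hh : h ∈ AddSubgroup.closure ({g, h, k} : Set GZ) :=
    AddSubgroup.subset_closure (by simp)
  have hk : k ∈ AddSubgroup.closure ({g, h, k} : Set GZ) :=
    AddSubgroup.subset_closure (by simp)
  rcases hspan x with rfl | rfl | rfl | rfl | rfl | rfl | rfl | rfl
  exacts [zero_mem _, hg, hh, hk, add_mem hg hh, add_mem hg hk, add_mem hh hk,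
    add_mem (add_mem hg hh) hk]

set_option synthInstance.maxSize 2000 in
theorem exists_closure_eq_top {g : GZ} (hg : g ≠ 0) :
    ∃ h k : GZ, AddSubgroup.closure ({g, h, k} : Set GZ) = ⊤ := by
  have : ∀ g : GZ, g ≠ 0 → ∃ h k : GZ,
      ∀ x : GZ, x = 0 ∨ x = g ∨ x = h ∨ x = k ∨ x = g + h ∨ x = g + k ∨ x = h + k ∨
      x = g + h + k := by
    decide
  obtain ⟨h, k, hspan⟩ := this g hg
  exact ⟨h, k, closure_eq_top_of_forall hspan⟩

set_option synthInstance.maxSize 2000 in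
theorem degenerate_or_closure_eq_top (g h k : GZ) :
    (g = 0 ∨ h = 0 ∨ k = 0 ∨ g = h ∨ h = k ∨ k = g ∨ h + k = g) ∨
      AddSubgroup.closure ({g, h, k} : Set GZ) = ⊤ := by
  have : ∀ g h k : GZ, (g = 0 ∨ h = 0 ∨ k = 0 ∨ g = h ∨ h = k ∨ k = g ∨ h + k = g) ∨
      ∀ x : GZ, x = 0 ∨ x = g ∨ x = h ∨ x = k ∨ x = g + h ∨ x = g + k ∨ x = h + k ∨
        x = g + h + k := by
    decide
  exact (this g h k).imp_right closure_eq_top_of_forall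

end GZ

namespace LieGrading

variable {L : Type} [LieRing L] [LieAlgebra ℂ L] (Γ : LieGrading GZ L)

theorem comp_ne_bot
    (hgen : ∀ g h k : GZ, AddSubgroup.closure ({g, h, k} : Set GZ) = ⊤ →
      ∃ x ∈ Γ.comp g, ∃ y ∈ Γ.comp h, ∃ z ∈ Γ.comp k,
        LinearIndependent ℂ ![⁅x, ⁅y, z⁆⁆, ⁅y, ⁅z, x⁆⁆])
    {g : GZ} (hg : g ≠ 0) : Γ.comp g ≠ ⊥ := by
  obtain ⟨h, k, hcl⟩ := GZ.exists_closure_eq_top hg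
  obtain ⟨x, hx, y, -, z, -, hli⟩ := hgen g h k hcl
  intro hbot
  rw [hbot, Submodule.mem_bot] at hx
  subst hx
  simpa using hli.ne_zero 0

variable {Γ} in
theorem IsContractedBracket.jacobiator_eq_zero_of_mem {ε : GZ → GZ → ℂ}
    {B : L →ₗ[ℂ] L →ₗ[ℂ] L} (hB : Γ.IsContractedBracket ε B) (h0 : Γ.comp 0 = ⊥)
    (hdiag : ∀ g, ε g g = 0) (hsymm : ∀ g h, ε g h = ε h g)
    (hb2 : ∀ g h k : GZ, AddSubgroup.closure ({g, h, k} : Set GZ) = ⊤ →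
      ternary ε g h k = ternary ε k g h)
    {g h k : GZ} {x y z : L} (hx : x ∈ Γ.comp g) (hy : y ∈ Γ.comp h) (hz : z ∈ Γ.comp k) :
    jacobiator B x y z = 0 := by
  have hzero {w : L} (hw : w ∈ Γ.comp 0) : w = 0 := by rwa [h0, Submodule.mem_bot] at hw
  have hsame {a b : GZ} {u v w : L} (hu : u ∈ Γ.comp a) (hv : v ∈ Γ.comp a)
      (hw : w ∈ Γ.comp b) : jacobiator B u v w = 0 := by
    refine hB.jacobiator_eq_zero_of_mem_same hsymm hu hv hw (hzero ?_)
    rw [← CharTwo.add_self_eq_zero a]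
    exact Γ.bracket_mem a a u v hu hv
  rcases GZ.degenerate_or_closure_eq_top g h k with
    (rfl | rfl | rfl | rfl | rfl | rfl | rfl) | hcl
  · simp [jacobiator, hzero hx]
  · simp [jacobiator, hzero hy]
  · simp [jacobiator, hzero hz]
  · exact hsame hx hy hz
  · rw [jacobiator_cycle]; exact hsame hy hz hx
  · rw [← jacobiator_cycle]; exact hsame hz hx hy
  · -- the three degrees sum to zero, so every ternary value meets a diagonal `ε a a`
    have h₁ := ternary_eq_zero_of_add_eq hdiag (rfl : h + k = h + k)
    have h₂ := ternary_eq_zero_of_add_eq hdiag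
      (show k + (h + k) = h by rw [add_comm h k, CharTwo.add_cancel_left])
    have h₃ := ternary_eq_zero_of_add_eq hdiag
      (show h + k + h = k by rw [add_comm h k, CharTwo.add_cancel_right])
    exact hB.jacobiator_eq_zero_of_ternary_eq hx hy hz (h₁.trans h₃.symm) (h₂.trans h₃.symm)
  · have hcl' : AddSubgroup.closure ({h, k, g} : Set GZ) = ⊤ := by
      rwa [Set.pair_comm, Set.insert_comm]
    exact hB.jacobiator_eq_zero_of_ternary_eq hx hy hz (hb2 g h k hcl)
      ((hb2 h k g hcl').trans (hb2 g h k hcl))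

end LieGrading

/-- Let `Γ` be a `(ℤ/2)³`-grading of a Lie algebra `L` with `L_e = 0`, with
`[L_g, L_h] = L_{g+h}` for distinct nonzero `g, h`, and such that whenever `g, h, k`
generate `G` there are homogeneous `x, y, z` with `[x,[y,z]]` and `[y,[z,x]]` linearly
independent. Then an admissible map `ε` is a graded contraction of `Γ` iff it is symmetric
and satisfies `ε(g, h+k)ε(h,k) = ε(k, g+h)ε(g,h)` whenever `⟨g,h,k⟩ = G`. -/
theorem admissible_isGradedContraction_iff
    {L : Type} [LieRing L] [LieAlgebra ℂ L] (Γ : LieGrading GZ L)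
    (h0 : Γ.comp 0 = ⊥)
    (hsurj : ∀ g h : GZ, g ≠ 0 → h ≠ 0 → g ≠ h →
      Submodule.span ℂ {z : L | ∃ x ∈ Γ.comp g, ∃ y ∈ Γ.comp h, z = ⁅x, y⁆} = Γ.comp (g + h))
    (hgen : ∀ g h k : GZ, AddSubgroup.closure ({g, h, k} : Set GZ) = ⊤ →
      ∃ x ∈ Γ.comp g, ∃ y ∈ Γ.comp h, ∃ z ∈ Γ.comp k,
        LinearIndependent ℂ ![⁅x, ⁅y, z⁆⁆, ⁅y, ⁅z, x⁆⁆])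
    (ε : GZ → GZ → ℂ)
    (hadm : ∀ g : GZ, ε g g = 0 ∧ ε 0 g = 0 ∧ ε g 0 = 0) :
    (∃ c : GradedContraction Γ, c.eps = ε) ↔
      ((∀ g h : GZ, ε g h = ε h g) ∧
        ∀ g h k : GZ, AddSubgroup.closure ({g, h, k} : Set GZ) = ⊤ →
          ε g (h + k) * ε h k = ε k (g + h) * ε g h) := by
  constructor
  · rintro ⟨c, rfl⟩
    have hB : Γ.IsContractedBracket c.eps c.bracket := c.bracket_apply
    have hne (g h : GZ) (hg : g ≠ 0) (hh : h ≠ 0) (hgh : g ≠ h) :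
        ∃ x ∈ Γ.comp g, ∃ y ∈ Γ.comp h, ⁅x, y⁆ ≠ 0 :=
      Γ.exists_lie_ne_zero (hsurj g h hg hh hgh)
        (Γ.comp_ne_bot hgen (mt CharTwo.add_eq_zero.1 hgh))
    refine ⟨hB.eps_comm hadm c.bracket_self hne, fun g h k hcl => ?_⟩
    obtain ⟨x, hx, y, hy, z, hz, hli⟩ := hgen g h k hcl
    exact hB.ternary_eq_of_linearIndependent hx hy hz (c.jacobi x y z) hli
  · rintro ⟨hsymm, hb2⟩
    have hB := Γ.isContractedBracket_contractedBracket ε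
    refine ⟨⟨ε, Γ.contractedBracket ε, hB, hB.isAlt_of_symm hsymm,
      Γ.jacobiator_eq_zero_of_homogeneous _ fun g h k x y z hx hy hz => ?_⟩, rfl⟩
    exact hB.jacobiator_eq_zero_of_mem h0 (fun g => (hadm g).1) hsymm hb2 hx hy hz
end
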